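/- arXiv:1901.04676 — 4 statements merged into one kernel-verified Lean document; each statement's English description precedes it below -/
import Mathlib

section
/- Let K sensors have costs C : Fin K → ℝ (with C_{i⋆} ≥ C_j for j < i⋆ and C_j ≥ C_{i⋆} for j > i⋆), error rates γ, and pairwise disagreement probabilities p_{ij} = P(Y^i ≠ Y^j) satisfying |γ_i − γ_j| ≤ p_{ij} and the optimality conditions: for all j < i⋆, C_{i⋆} − C_j ≤ γ_j − γ_{i⋆}; and for all j > i⋆, C_j − C_{i⋆} > p_{i⋆ j} (the weak dominance property). Define B^l = {i : ∀ j < i, C_i − C_j ≤ p_{ji}} ∪ {the first sensor} and B^h = {i : ∀ j > i, C_j − C_i > p_{ij}} ∪ {the last sensor}. Then i⋆ ∈ B^l ∩ B^h. -/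
theorem optimal_in_Bl_inter_Bh
    {K : ℕ} (hK : 0 < K) (C γ : Fin K → ℝ) (p : Fin K → Fin K → ℝ)
    (hCmono : ∀ i j : Fin K, i ≤ j → C i ≤ C j)
    (hpsymm : ∀ i j, p i j = p j i)
    (hp01 : ∀ i j, p i j ∈ Set.Icc (0:ℝ) 1)
    (hpγ : ∀ i j, |γ i - γ j| ≤ p i j)
    (istar : Fin K)
    (hlow : ∀ j, j < istar → C istar - C j ≤ γ j - γ istar)
    (hwd : ∀ j, istar < j → C j - C istar > p istar j) :
    istar ∈ ({i : Fin K | ∀ j, j < i → C i - C j ≤ p j i} ∪ {⟨0, hK⟩}) ∩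
      ({i : Fin K | ∀ j, i < j → C j - C i > p i j} ∪ {⟨K - 1, Nat.sub_lt hK one_pos⟩}) := by
  constructor
  · left
    intro j hj
    calc C istar - C j ≤ γ j - γ istar := hlow j hj
      _ ≤ |γ j - γ istar| := le_abs_self _
      _ ≤ p j istar := hpγ j istar
  · left
    intro j hj
    exact hwd j hj
end

section
/- With the hypotheses of the previous lemma (in particular weak dominance: C_j − C_{i⋆} > p_{i⋆ j} for all j > i⋆, and C_{i⋆} − C_j ≤ γ_j − γ_{i⋆} ≤ p_{i⋆ j} for all j < i⋆), the intersection B = B^l ∩ B^h is exactly the singleton {i⋆}. -/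
theorem B_is_singleton_optimal
    {K : ℕ} (hK : 0 < K) (C γ : Fin K → ℝ) (p : Fin K → Fin K → ℝ)
    (hCmono : ∀ i j : Fin K, i ≤ j → C i ≤ C j)
    (hpsymm : ∀ i j, p i j = p j i)
    (hp01 : ∀ i j, p i j ∈ Set.Icc (0:ℝ) 1)
    (hpγ : ∀ i j, |γ i - γ j| ≤ p i j)
    (istar : Fin K)
    (hlow : ∀ j, j < istar → C istar - C j ≤ γ j - γ istar)
    (hwd : ∀ j, istar < j → C j - C istar > p istar j) :
    (({i : Fin K | ∀ j, j < i → C i - C j ≤ p j i} ∪ {⟨0, hK⟩}) ∩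
      ({i : Fin K | ∀ j, i < j → C j - C i > p i j} ∪ {⟨K - 1, Nat.sub_lt hK one_pos⟩}))
      = {istar} := by
  ext i
  simp only [Set.mem_inter_iff, Set.mem_union, Set.mem_setOf_eq, Set.mem_singleton_iff]
  constructor
  · rintro ⟨h1, h2⟩
    have hl : ∀ j, j < i → C i - C j ≤ p j i := by
      rcases h1 with h | h
      · exact h
      · intro j hj
        exfalso
        subst h
        exact absurd hj (by simp [Fin.lt_def])
    have hh : ∀ j, i < j → C j - C i > p i j := by
      rcases h2 with h | h
      · exact h
      · intro j hj
        exfalso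
        subst h
        have : (j : ℕ) < K := j.2
        have : (K - 1 : ℕ) < (j : ℕ) := hj
        omega
    rcases lt_trichotomy i istar with hlt | heq | hgt
    · exfalso
      have h3 := hh istar hlt
      have h4 := hlow i hlt
      have h5 := hpγ i istar
      have h6 := le_abs_self (γ i - γ istar)
      linarith
    · exact heq
    · exfalso
      have h3 := hl istar hgt
      have h4 := hwd i hgt
      linarith
  · rintro rfl
    constructor
    · left
      intro j hj
      have h4 := hlow j hj
      have h5 := hpγ j i
      have h6 := le_abs_self (γ j - γ i)
      linarith
    · left
      exact fun j hj => hwd j hj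
end

section
/- Let b, c, d > 0 and let X_1, X_2, … be independent [0,1]-valued random variables with common mean μ, and μ̂_t = (1/t)∑_{s=1}^t X_s. Then for every n, ∑_{t=1}^n P(μ̂_t − μ ≥ b − √(cd/t)) ≤ 1 + (1/b²)(cd + √(πcd/2) + 1/2). -/
/-!
By Hoeffding's inequality the `t`-th probability is at most `exp (-2 t ε²)` with
`ε = b - √(cd/t)`, that is `exp (-2 (b√t - √(cd))²)`, as soon as `ε ≥ 0`, i.e. `t ≥ cd/b²`.
The first `T = ⌈cd/b²⌉ ≤ cd/b² + 1` terms are bounded by `1`. Beyond `T` the bound decreases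
in `t`, so the remaining sum is at most `∫_T^∞ exp (-2 (b√s - √(cd))²) ds`, and the substitution
`u = b√s - √(cd)` bounds this by `(2/b²) ∫_0^∞ (u + √(cd)) exp (-2u²) du = (1/2 + √(πcd/2)) / b²`.
-/

open MeasureTheory ProbabilityTheory Real

theorem measureReal_empiricalMean_sub_ge_le {Ω : Type*} [MeasurableSpace Ω] {μ : Measure Ω}
    [IsProbabilityMeasure μ] {X : ℕ → Ω → ℝ} (hmeas : ∀ i, AEMeasurable (X i) μ)
    (hindep : iIndepFun X μ) (hrange : ∀ i, ∀ᵐ ω ∂μ, X i ω ∈ Set.Icc (0 : ℝ) 1) {m : ℝ}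
    (hmean : ∀ i, μ[X i] = m) {t : ℕ} (ht : 0 < t) {ε : ℝ} (hε : 0 ≤ ε) :
    μ.real {ω | ε ≤ 1 / (t : ℝ) * ∑ s ∈ Finset.range t, X s ω - m} ≤ exp (-2 * t * ε ^ 2) := by
  have hsubG : ∀ i < t, HasSubgaussianMGF (fun ω ↦ X i ω - m) ((‖(1 : ℝ) - 0‖₊ / 2) ^ 2) μ :=
    fun i _ ↦ hmean i ▸ hasSubgaussianMGF_of_mem_Icc (hmeas i) (hrange i)
  have hindep' : iIndepFun (fun i ω ↦ X i ω - m) μ :=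
    hindep.comp (fun _ x ↦ x - m) fun _ ↦ measurable_sub_const m
  have ht' : (0 : ℝ) < t := by exact_mod_cast ht
  calc μ.real {ω | ε ≤ 1 / (t : ℝ) * ∑ s ∈ Finset.range t, X s ω - m}
      = μ.real {ω | t * ε ≤ ∑ s ∈ Finset.range t, (X s ω - m)} := by
        congr with ω
        rw [Finset.sum_sub_distrib, Finset.sum_const, Finset.card_range, nsmul_eq_mul,
          le_sub_iff_add_le, one_div_mul_eq_div, le_div_iff₀ ht']
        constructor <;> intro h <;> linarith
    _ ≤ exp (-(t * ε) ^ 2 / (2 * t * ((‖(1 : ℝ) - 0‖₊ / 2) ^ 2 : NNReal))) :=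
        HasSubgaussianMGF.measure_sum_range_ge_le_of_iIndepFun hindep' hsubG (by positivity)
    _ = exp (-2 * t * ε ^ 2) := by
        congr 1
        norm_num
        field_simp
        ring

theorem measureReal_empiricalMean_sub_ge_sub_sqrt_le {Ω : Type*} [MeasurableSpace Ω]
    {μ : Measure Ω} [IsProbabilityMeasure μ] {X : ℕ → Ω → ℝ} (hmeas : ∀ i, AEMeasurable (X i) μ)
    (hindep : iIndepFun X μ) (hrange : ∀ i, ∀ᵐ ω ∂μ, X i ω ∈ Set.Icc (0 : ℝ) 1) {m : ℝ}
    (hmean : ∀ i, μ[X i] = m) {b κ : ℝ} (hb : 0 < b) {t : ℕ} (ht : 0 < t)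
    (hκt : κ / b ^ 2 ≤ t) :
    μ.real {ω | b - √(κ / t) ≤ 1 / (t : ℝ) * ∑ s ∈ Finset.range t, X s ω - m} ≤
      exp (-2 * (b * √t - √κ) ^ 2) := by
  have ht' : (0 : ℝ) < t := by exact_mod_cast ht
  have hκt' : κ / t ≤ b ^ 2 := by
    rw [div_le_iff₀ (by positivity)] at hκt
    rw [div_le_iff₀ ht']
    linarith
  have hε : 0 ≤ b - √(κ / t) := sub_nonneg.2 ((sqrt_le_sqrt hκt').trans_eq (sqrt_sq hb.le))
  refine (measureReal_empiricalMean_sub_ge_le hmeas hindep hrange hmean ht hε).trans_eq ?_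
  have hsqrt : 0 < √t := sqrt_pos.2 ht'
  rw [sqrt_div' _ ht'.le, mul_assoc]
  congr 2
  nth_rw 1 [← sq_sqrt ht'.le]
  field_simp

theorem integral_mul_exp_neg_mul_sq_le {a : ℝ} (ha : 0 < a) (x y : ℝ) :
    ∫ u in x..y, u * exp (-a * u ^ 2) ≤ 1 / (2 * a) := by
  have hderiv (u : ℝ) :
      HasDerivAt (fun v ↦ -exp (-a * v ^ 2) / (2 * a)) (u * exp (-a * u ^ 2)) u := by
    refine (((hasDerivAt_pow 2 u).const_mul (-a)).exp.neg.div_const (2 * a)).congr_deriv ?_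
    field_simp
    push_cast
    ring
  rw [intervalIntegral.integral_eq_sub_of_hasDerivAt (fun u _ ↦ hderiv u)
    ((by fun_prop : Continuous fun u ↦ u * exp (-a * u ^ 2)).intervalIntegrable _ _)]
  have hx : exp (-a * x ^ 2) ≤ 1 := exp_le_one_iff.2 (by nlinarith [sq_nonneg x])
  have hy := exp_pos (-a * y ^ 2)
  rw [← sub_div]
  gcongr
  linarith

theorem integral_exp_neg_mul_sq_le {a x y : ℝ} (ha : 0 < a) (hx : 0 ≤ x) (hxy : x ≤ y) :
    ∫ u in x..y, exp (-a * u ^ 2) ≤ √(π / a) / 2 := by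
  rw [intervalIntegral.integral_of_le hxy, ← integral_gaussian_Ioi a]
  exact setIntegral_mono_set (integrable_exp_neg_mul_sq ha).integrableOn
    (ae_of_all _ fun u ↦ (exp_pos _).le)
    (Set.Ioc_subset_Ioi_self.trans (Set.Ioi_subset_Ioi hx)).eventuallyLE

theorem integral_add_mul_exp_neg_two_mul_sq_le {r x y : ℝ} (hr : 0 ≤ r) (hx : 0 ≤ x)
    (hxy : x ≤ y) :
    ∫ u in x..y, (u + r) * exp (-2 * u ^ 2) ≤ 1 / 4 + r * (√(π / 2) / 2) := by
  have hsplit : ∫ u in x..y, (u + r) * exp (-2 * u ^ 2) =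
      (∫ u in x..y, u * exp (-2 * u ^ 2)) + r * ∫ u in x..y, exp (-2 * u ^ 2) := by
    simp_rw [add_mul, ← intervalIntegral.integral_const_mul]
    exact intervalIntegral.integral_add ((by fun_prop : Continuous _).intervalIntegrable _ _)
      ((by fun_prop : Continuous _).intervalIntegrable _ _)
  rw [hsplit]
  gcongr
  · exact (integral_mul_exp_neg_mul_sq_le two_pos x y).trans_eq (by norm_num)
  · exact integral_exp_neg_mul_sq_le two_pos hx hxy

theorem integral_comp_mul_sqrt_sub {g : ℝ → ℝ} (hg : Continuous g) {b r x y : ℝ} (hb : 0 < b)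
    (hx : 0 ≤ x) (hy : 0 ≤ y) :
    ∫ s in x..y, g (b * √s - r) =
      2 / b ^ 2 * ∫ u in (b * √x - r)..(b * √y - r), (u + r) * g u := by
  have hsq (z : ℝ) (hz : 0 ≤ z) : ((b * √z - r + r) / b) ^ 2 = z := by
    rw [sub_add_cancel, mul_div_cancel_left₀ _ hb.ne', sq_sqrt hz]
  have hderiv (u : ℝ) : HasDerivAt (fun v ↦ ((v + r) / b) ^ 2) (2 * (u + r) / b ^ 2) u := by
    refine ((((hasDerivAt_id' u).add_const r).div_const b).fun_pow 2).congr_deriv ?_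
    norm_num
    ring
  have key := intervalIntegral.integral_comp_mul_deriv (a := b * √x - r) (b := b * √y - r)
    (g := fun s ↦ g (b * √s - r)) (fun u _ ↦ hderiv u) (by fun_prop) (hg.comp (by fun_prop))
  rw [hsq x hx, hsq y hy] at key
  rw [← key, ← intervalIntegral.integral_const_mul]
  refine intervalIntegral.integral_congr fun u hu ↦ ?_
  have hur : 0 ≤ u + r := by
    rcases Set.mem_uIcc.1 hu with h | h <;> nlinarith [sqrt_nonneg x, sqrt_nonneg y]
  simp only [Function.comp_apply]
  rw [sqrt_sq (by positivity), mul_div_cancel₀ _ hb.ne', add_sub_cancel_right]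
  ring

theorem antitoneOn_exp_neg_two_mul_sq_mul_sqrt_sub {b r : ℝ} (hb : 0 < b) :
    AntitoneOn (fun s ↦ exp (-2 * (b * √s - r) ^ 2)) (Set.Ici ((r / b) ^ 2)) := by
  intro s hs s' _ hss'
  have hr : r ≤ b * √s := by
    have := (le_abs_self (r / b)).trans ((sqrt_sq_eq_abs (r / b)).symm.le.trans (sqrt_le_sqrt hs))
    rwa [div_le_iff₀' hb] at this
  have := mul_le_mul_of_nonneg_left (sqrt_le_sqrt hss') hb.le
  exact exp_le_exp.2 (by nlinarith)

theorem sum_Ico_exp_neg_two_mul_sq_mul_sqrt_sub_le {b r : ℝ} (hb : 0 < b) (hr : 0 ≤ r)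
    {T N : ℕ} (hT : (r / b) ^ 2 ≤ T) (hTN : T ≤ N) :
    ∑ i ∈ Finset.Ico T N, exp (-2 * (b * √(i + 1 : ℕ) - r) ^ 2) ≤
      (r * √(π / 2) + 1 / 2) / b ^ 2 := by
  have hT0 : (0 : ℝ) ≤ T := (sq_nonneg _).trans hT
  have hrT : r ≤ b * √T := by
    rw [← div_le_iff₀' hb, ← sqrt_sq (div_nonneg hr hb.le)]
    exact sqrt_le_sqrt hT
  have hTN' : √T ≤ √N := sqrt_le_sqrt (by exact_mod_cast hTN)
  calc ∑ i ∈ Finset.Ico T N, exp (-2 * (b * √(i + 1 : ℕ) - r) ^ 2)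
      ≤ ∫ s in (T : ℝ)..N, exp (-2 * (b * √s - r) ^ 2) :=
        ((antitoneOn_exp_neg_two_mul_sq_mul_sqrt_sub hb).mono
          (Set.Icc_subset_Ici_self.trans (Set.Ici_subset_Ici.2 hT))).sum_le_integral_Ico hTN
    _ = 2 / b ^ 2 * ∫ u in (b * √T - r)..(b * √N - r), (u + r) * exp (-2 * u ^ 2) :=
        integral_comp_mul_sqrt_sub (g := fun u ↦ exp (-2 * u ^ 2)) (by fun_prop) hb hT0
          (Nat.cast_nonneg N)
    _ ≤ 2 / b ^ 2 * (1 / 4 + r * (√(π / 2) / 2)) := by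
        gcongr
        exact integral_add_mul_exp_neg_two_mul_sq_le hr (by linarith) (by nlinarith)
    _ = (r * √(π / 2) + 1 / 2) / b ^ 2 := by ring

theorem sum_prob_bound
    {Ω : Type*} [MeasurableSpace Ω] (μ : Measure Ω) [IsProbabilityMeasure μ]
    (b c d : ℝ) (hb : 0 < b) (hc : 0 < c) (hd : 0 < d)
    (X : ℕ → Ω → ℝ) (hmeas : ∀ t, Measurable (X t))
    (hindep : iIndepFun X μ)
    (hrange : ∀ t ω, X t ω ∈ Set.Icc (0:ℝ) 1)
    (m : ℝ) (hmean : ∀ t, ∫ ω, X t ω ∂μ = m) (n : ℕ) :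
    ∑ t ∈ Finset.Icc 1 n,
        (μ {ω | (1 / (t : ℝ)) * ∑ s ∈ Finset.range t, X s ω - m ≥
            b - Real.sqrt (c * d / t)}).toReal ≤
      1 + (1 / b ^ 2) * (c * d + Real.sqrt (π * c * d / 2) + 1 / 2) := by
  set P : ℕ → ℝ := fun t ↦ μ.real {ω | b - √(c * d / t) ≤
    1 / (t : ℝ) * ∑ s ∈ Finset.range t, X s ω - m}
  have hcd : 0 ≤ c * d := by positivity
  set T := ⌈c * d / b ^ 2⌉₊
  have hT : (√(c * d) / b) ^ 2 ≤ T := by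
    rw [div_pow, sq_sqrt hcd]
    exact Nat.le_ceil _
  have hP_tail (i : ℕ) (hi : T ≤ i) :
      P (i + 1) ≤ exp (-2 * (b * √(i + 1 : ℕ) - √(c * d)) ^ 2) :=
    measureReal_empiricalMean_sub_ge_sub_sqrt_le (fun s ↦ (hmeas s).aemeasurable) hindep
      (fun s ↦ ae_of_all _ (hrange s)) hmean hb i.succ_pos
      ((Nat.le_ceil _).trans (mod_cast hi.trans i.le_succ))
  calc ∑ t ∈ Finset.Icc 1 n, P t
      = ∑ i ∈ Finset.range n, P (i + 1) := by
        rw [Finset.range_eq_Ico, Finset.sum_Ico_add']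
        rfl
    _ ≤ ∑ i ∈ Finset.range (max n T), P (i + 1) :=
        Finset.sum_le_sum_of_subset_of_nonneg (Finset.range_mono (le_max_left _ _))
          fun _ _ _ ↦ measureReal_nonneg
    _ = ∑ i ∈ Finset.range T, P (i + 1) + ∑ i ∈ Finset.Ico T (max n T), P (i + 1) :=
        (Finset.sum_range_add_sum_Ico _ (le_max_right _ _)).symm
    _ ≤ T + (√(c * d) * √(π / 2) + 1 / 2) / b ^ 2 := by
        gcongr
        · exact (Finset.sum_le_card_nsmul _ _ 1 fun _ _ ↦ measureReal_le_one).trans_eq (by simp)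
        · exact (Finset.sum_le_sum fun i hi ↦ hP_tail i (Finset.mem_Ico.1 hi).1).trans
            (sum_Ico_exp_neg_two_mul_sq_mul_sqrt_sub_le hb (sqrt_nonneg _) hT (le_max_right _ _))
    _ ≤ c * d / b ^ 2 + 1 + (√(c * d) * √(π / 2) + 1 / 2) / b ^ 2 := by
        gcongr
        exact (Nat.ceil_lt_add_one (by positivity)).le
    _ = 1 + (1 / b ^ 2) * (c * d + √(π * c * d / 2) + 1 / 2) := by
        rw [← sqrt_mul hcd]
        ring_nf
end

section
/- Let X_1, …, X_t be independent [0,1]-valued random variables with common mean p, and let p̂_s be the mean of the first s of them. For ξ > 0 and α, f(t) ≥ 1, ∑_{s=1}^t P(p̂_s − p ≤ −(ξ + √(α log f(t)/s))) ≤ 1/(2 ξ² f(t)^{2α}). -/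
/-!
By Hoeffding's inequality, the `s`-th probability is at most
`exp (-2 s (ξ + √(α log F / s))²) ≤ exp (-2 ξ² s) · F ^ (-2α)`, the cross term being dropped.
The remaining sum `∑ exp (-2 ξ² s)` over `s ≥ 1` is bounded by `∫₀^∞ exp (-2 ξ² x) dx = 1 / (2 ξ²)`,
since the summand is antitone in `s`.
-/

open MeasureTheory ProbabilityTheory Real

lemma measureReal_sampleMean_sub_le_neg_le {Ω : Type*} [MeasurableSpace Ω] {μ : Measure Ω}
    [IsProbabilityMeasure μ] {X : ℕ → Ω → ℝ} (hmeas : ∀ r, Measurable (X r))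
    (hindep : iIndepFun X μ) (hrange : ∀ r ω, X r ω ∈ Set.Icc (0 : ℝ) 1) {p : ℝ}
    (hmean : ∀ r, ∫ ω, X r ω ∂μ = p) {s : ℕ} (hs : 0 < s) {ε : ℝ} (hε : 0 ≤ ε) :
    μ.real {ω | (1 / (s : ℝ)) * ∑ r ∈ Finset.range s, X r ω - p ≤ -ε} ≤
      exp (-(2 * s * ε ^ 2)) := by
  have hs' : (0 : ℝ) < s := Nat.cast_pos.mpr hs
  have hsubG : ∀ r < s, HasSubgaussianMGF (fun ω ↦ p - X r ω) ((‖(1 : ℝ) - 0‖₊ / 2) ^ 2) μ :=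
    fun r _ ↦ (hasSubgaussianMGF_of_mem_Icc (hmeas r).aemeasurable
      (ae_of_all _ (hrange r))).neg.congr (ae_of_all _ fun ω ↦ by simp [hmean r])
  have hindep' : iIndepFun (fun r ω ↦ p - X r ω) μ :=
    hindep.comp (fun _ x ↦ p - x) fun _ ↦ measurable_const.sub measurable_id
  have hset : {ω | (1 / (s : ℝ)) * ∑ r ∈ Finset.range s, X r ω - p ≤ -ε} =
      {ω | s * ε ≤ ∑ r ∈ Finset.range s, (p - X r ω)} := by
    ext ω
    simp only [Set.mem_ofPred_eq, Finset.sum_sub_distrib, Finset.sum_const, Finset.card_range,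
      nsmul_eq_mul]
    rw [one_div, inv_mul_eq_div, sub_le_iff_le_add, div_le_iff₀ hs']
    constructor <;> intro h <;> linarith
  rw [hset]
  refine (HasSubgaussianMGF.measure_sum_range_ge_le_of_iIndepFun hindep' hsubG
    (by positivity)).trans_eq ?_
  congr 1
  norm_num
  field_simp
  ring

lemma exp_neg_two_mul_add_sqrt_div_sq_le {ξ a s : ℝ} (hξ : 0 ≤ ξ) (ha : 0 ≤ a) (hs : 0 < s) :
    exp (-(2 * s * (ξ + √(a / s)) ^ 2)) ≤ exp (-(2 * ξ ^ 2) * s) * exp (-(2 * a)) := by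
  have hsqrt : s * √(a / s) ^ 2 = a := by
    rw [sq_sqrt (div_nonneg ha hs.le)]; field_simp
  rw [← exp_add, exp_le_exp]
  nlinarith [mul_nonneg (mul_nonneg hs.le hξ) (sqrt_nonneg (a / s))]

lemma sum_Icc_exp_neg_mul_le_inv {c : ℝ} (hc : 0 < c) (t : ℕ) :
    ∑ s ∈ Finset.Icc 1 t, exp (-c * s) ≤ c⁻¹ := by
  have hanti : AntitoneOn (fun x : ℝ ↦ exp (-c * x)) (Set.Icc 0 (0 + t)) := fun x _ y _ hxy ↦
    exp_le_exp.mpr (mul_le_mul_of_nonpos_left hxy (neg_nonpos.mpr hc.le))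
  calc ∑ s ∈ Finset.Icc 1 t, exp (-c * s)
      = ∑ i ∈ Finset.range t, exp (-c * (0 + ↑(i + 1))) := by
        simp only [zero_add]
        rw [Finset.range_eq_Ico, ← Finset.Ico_add_one_right_eq_Icc]
        exact (Finset.sum_Ico_add' (fun s : ℕ ↦ exp (-c * s)) 0 t 1).symm
    _ ≤ ∫ x in (0 : ℝ)..0 + t, exp (-c * x) := hanti.sum_le_integral
    _ = ∫ x in Set.Ioc 0 (t : ℝ), exp (-c * x) := by
        rw [zero_add, intervalIntegral.integral_of_le (Nat.cast_nonneg t)]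
    _ ≤ ∫ x in Set.Ioi 0, exp (-c * x) :=
        setIntegral_mono_set (integrableOn_exp_mul_Ioi (neg_neg_of_pos hc) 0)
          (ae_of_all _ fun x ↦ (exp_pos _).le) Set.Ioc_subset_Ioi_self.eventuallyLE
    _ = c⁻¹ := by rw [integral_exp_mul_Ioi (neg_neg_of_pos hc)]; simp

theorem sum_prob_lower_dev_bound
    {Ω : Type*} [MeasurableSpace Ω] (μ : Measure Ω) [IsProbabilityMeasure μ]
    (ξ α F : ℝ) (hξ : 0 < ξ) (hα : 1 ≤ α) (hF : 1 ≤ F)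
    (X : ℕ → Ω → ℝ) (hmeas : ∀ s, Measurable (X s))
    (hindep : iIndepFun X μ)
    (hrange : ∀ s ω, X s ω ∈ Set.Icc (0:ℝ) 1)
    (p : ℝ) (hmean : ∀ s, ∫ ω, X s ω ∂μ = p) (t : ℕ) :
    ∑ s ∈ Finset.Icc 1 t,
        (μ {ω | (1 / (s : ℝ)) * ∑ r ∈ Finset.range s, X r ω - p ≤
            -(ξ + Real.sqrt (α * Real.log F / s))}).toReal ≤
      1 / (2 * ξ ^ 2 * F ^ (2 * α)) := by
  have hlog : 0 ≤ α * log F := mul_nonneg (one_pos.trans_le hα).le (log_nonneg hF)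
  have hterm : ∀ s ∈ Finset.Icc 1 t,
      μ.real {ω | (1 / (s : ℝ)) * ∑ r ∈ Finset.range s, X r ω - p ≤
          -(ξ + √(α * log F / s))} ≤ exp (-(2 * ξ ^ 2) * s) * exp (-(2 * (α * log F))) := by
    intro s hs
    have hs₀ : 0 < s := (Finset.mem_Icc.mp hs).1
    exact (measureReal_sampleMean_sub_le_neg_le hmeas hindep hrange hmean hs₀
      (by positivity)).trans (exp_neg_two_mul_add_sqrt_div_sq_le hξ.le hlog (Nat.cast_pos.mpr hs₀))
  have hpow : exp (-(2 * (α * log F))) = (F ^ (2 * α))⁻¹ := by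
    rw [rpow_def_of_pos (one_pos.trans_le hF), ← exp_neg]
    ring_nf
  calc _ ≤ (∑ s ∈ Finset.Icc 1 t, exp (-(2 * ξ ^ 2) * s)) * exp (-(2 * (α * log F))) := by
        rw [Finset.sum_mul]
        exact Finset.sum_le_sum hterm
    _ ≤ (2 * ξ ^ 2)⁻¹ * (F ^ (2 * α))⁻¹ := by
        rw [hpow]
        gcongr
        exact sum_Icc_exp_neg_mul_le_inv (by positivity) t
    _ = 1 / (2 * ξ ^ 2 * F ^ (2 * α)) := by rw [one_div, ← mul_inv]
end
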